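/- The function w₁(y) = (1/(2πi))·log y + (3/(2πi))·Σ_{m≥1} ((3m-1)!/(m!)³)(-y)^m satisfies the Picard–Fuchs operator L = θ³ + 3y·θ(3θ+1)(3θ+2), where θ = y·d/dy, i.e. L w₁ = 0, for 0 < |y| < 1/27. -/

import Mathlib

/-!
`θ` acts diagonally: `θ log y = 1` and `θ y^(n+1) = (n+1) y^(n+1)`. Hence, writing
`w₁ = (log y + 3 G₀) / (2πi)` with `G_k = ∑ (n+1)^k c_n y^(n+1)` and
`c_n = (-1)^(n+1) (3n+2)! / ((n+1)!)^3`, we have `θ G_k = G_(k+1)` on `|y| < 1/27`, where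
`(3n)! ≤ 27^n (n!)^3` makes the series converge, and
`L w₁ = (6y + 3 (G₃ + 3y (9G₃ + 9G₂ + 2G₁))) / (2πi)`. The recurrence
`(n+2)³ c_(n+1) = -3(n+1)(3n+4)(3n+5) c_n` kills every coefficient of
`G₃ + 3y (9G₃ + 9G₂ + 2G₁)` except that of `y`, which is `c₀ = -2` and cancels `6y`.
-/

open Complex

/-- The logarithmic derivative operator `θ = y·d/dy`. -/
noncomputable def theta (f : ℂ → ℂ) : ℂ → ℂ := fun y => y * deriv f y

/-- The local `ℙ²` Picard–Fuchs operator `L = θ³ + 3y·θ(3θ+1)(3θ+2)`. -/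
noncomputable def picardFuchs (f : ℂ → ℂ) : ℂ → ℂ := fun y =>
  theta (theta (theta f)) y +
    3 * y * theta (fun z =>
      3 * theta (fun u => 3 * theta f u + 2 * f u) z +
        (3 * theta f z + 2 * f z)) y

open Metric Set Filter Topology Nat

def HasThetaOn (f g : ℂ → ℂ) (U : Set ℂ) : Prop :=
  DifferentiableOn ℂ f U ∧ EqOn (theta f) g U

namespace HasThetaOn

variable {f f' g g' h : ℂ → ℂ} {U V : Set ℂ}

theorem mono (hf : HasThetaOn f g U) (hVU : V ⊆ U) : HasThetaOn f g V :=
  ⟨hf.1.mono hVU, hf.2.mono hVU⟩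

theorem congr (hf : HasThetaOn f g U) (hg : EqOn g h U) : HasThetaOn f h U :=
  ⟨hf.1, hf.2.trans hg⟩

theorem const_mul (hf : HasThetaOn f g U) (a : ℂ) :
    HasThetaOn (fun z => a * f z) (fun z => a * g z) U :=
  ⟨hf.1.const_mul a, fun z hz => by
    show _ = a * g z
    rw [← hf.2 hz]
    simp only [theta, deriv_const_mul_field']
    ring⟩

theorem add (hU : IsOpen U) (hf : HasThetaOn f g U) (hf' : HasThetaOn f' g' U) :
    HasThetaOn (fun z => f z + f' z) (fun z => g z + g' z) U :=
  ⟨hf.1.add hf'.1, fun z hz => by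
    show _ = g z + g' z
    rw [← hf.2 hz, ← hf'.2 hz]
    simp only [theta]
    rw [deriv_fun_add (hf.1.differentiableAt (hU.mem_nhds hz))
      (hf'.1.differentiableAt (hU.mem_nhds hz))]
    ring⟩

theorem theta (hU : IsOpen U) (hf : HasThetaOn f g U) (hg : HasThetaOn g h U) :
    HasThetaOn (_root_.theta f) h U :=
  ⟨hg.1.congr hf.2, fun z hz => by
    have hfg : _root_.theta f =ᶠ[𝓝 z] g := eventuallyEq_of_mem (hU.mem_nhds hz) hf.2
    rw [← hg.2 hz, _root_.theta, _root_.theta, hfg.deriv_eq]⟩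

end HasThetaOn

theorem hasThetaOn_const (a : ℂ) (U : Set ℂ) : HasThetaOn (fun _ => a) (fun _ => 0) U :=
  ⟨differentiableOn_const a, fun z _ => by simp [theta]⟩

theorem hasThetaOn_of_exp_eq {L : ℂ → ℂ} {U : Set ℂ} (hU : IsOpen U)
    (hL : DifferentiableOn ℂ L U) (hexp : ∀ y ∈ U, exp (L y) = y) :
    HasThetaOn L (fun _ => 1) U := by
  refine ⟨hL, fun z hz => ?_⟩
  have hLz : HasDerivAt L (deriv L z) z := (hL.differentiableAt (hU.mem_nhds hz)).hasDerivAt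
  have hid : (fun u => exp (L u)) =ᶠ[𝓝 z] id := eventuallyEq_of_mem (hU.mem_nhds hz) hexp
  have hchain := hLz.cexp.deriv
  rw [hid.deriv_eq, deriv_id, hexp z hz] at hchain
  exact hchain.symm

theorem picardFuchs_const_mul_add_const_mul {L : ℂ → ℂ} {G : ℕ → ℂ → ℂ} {U : Set ℂ}
    (hU : IsOpen U) (hL : HasThetaOn L (fun _ => 1) U)
    (hG : ∀ k, HasThetaOn (G k) (G (k + 1)) U) (a b : ℂ) {y : ℂ} (hy : y ∈ U) :
    picardFuchs (fun v => a * L v + b * G 0 v) y =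
      6 * a * y + b * (G 3 y + 3 * y * (9 * G 3 y + 9 * G 2 y + 2 * G 1 y)) := by
  have hw : HasThetaOn (fun v => a * L v + b * G 0 v) (fun z => a + b * G 1 z) U :=
    ((hL.const_mul a).add hU ((hG 0).const_mul b)).congr fun z _ => by simp
  have hw' : HasThetaOn (fun z => a + b * G 1 z) (fun z => b * G 2 z) U :=
    ((hasThetaOn_const a U).add hU ((hG 1).const_mul b)).congr fun z _ => by simp
  have hw'' : HasThetaOn (fun z => b * G 2 z) (fun z => b * G 3 z) U := (hG 2).const_mul b
  have hθw := hw.theta hU hw'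
  have hθθw := hθw.theta hU hw''
  -- `q = (3θ + 2) w` and `p = (3θ + 1) q`, so that `L w = θ³ w + 3y θ p`.
  have hq := (hθw.const_mul 3).add hU (hw.const_mul 2)
  have hθq := hq.theta hU ((hw''.const_mul 3).add hU (hw'.const_mul 2))
  have hp := (hθq.const_mul 3).add hU hq
  rw [picardFuchs, hθθw.2 hy, hp.2 hy]
  ring

noncomputable def momentSeries (c : ℕ → ℂ) (k : ℕ) (y : ℂ) : ℂ :=
  ∑' n : ℕ, ((n : ℂ) + 1) ^ k * c n * y ^ (n + 1)

theorem summable_succ_pow_mul_geometric_succ (k : ℕ) {x : ℝ} (hx : ‖x‖ < 1) :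
    Summable fun n : ℕ => ((n : ℝ) + 1) ^ k * x ^ (n + 1) := by
  refine ((summable_nat_add_iff (f := fun n : ℕ => (n : ℝ) ^ k * x ^ n) 1).2
    (summable_pow_mul_geometric_of_norm_lt_one k hx)).congr fun n => ?_
  push_cast
  ring

section momentSeries

variable {c : ℕ → ℂ} {K : ℝ}

theorem exists_summable_bound_momentSeries (hc : ∀ n, ‖c n‖ ≤ K ^ (n + 1)) (k : ℕ) {y : ℂ}
    (hy : ‖y‖ < K⁻¹) : ∃ r, ‖y‖ < r ∧ ∃ u : ℕ → ℝ, Summable u ∧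
      ∀ (n : ℕ), ∀ z ∈ ball (0 : ℂ) r, ‖((n : ℂ) + 1) ^ k * c n * z ^ (n + 1)‖ ≤ u n := by
  have hK : 0 < K := inv_pos.1 ((norm_nonneg y).trans_lt hy)
  obtain ⟨r, hyr, hrK⟩ := exists_between hy
  have hKr : ‖K * r‖ < 1 := by
    rw [Real.norm_eq_abs, abs_of_nonneg (by nlinarith [norm_nonneg y])]
    calc K * r < K * K⁻¹ := by gcongr
      _ = 1 := mul_inv_cancel₀ hK.ne'
  refine ⟨r, hyr, _, summable_succ_pow_mul_geometric_succ k hKr, fun n z hz => ?_⟩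
  have hz : ‖z‖ ≤ r := (mem_ball_zero_iff.1 hz).le
  have hn : ‖(n : ℂ) + 1‖ = (n : ℝ) + 1 := by exact_mod_cast Complex.norm_natCast (n + 1)
  rw [norm_mul, norm_mul, norm_pow, norm_pow, hn, mul_pow, mul_assoc]
  gcongr
  exact hc n

theorem summable_momentSeries (hc : ∀ n, ‖c n‖ ≤ K ^ (n + 1)) (k : ℕ) {y : ℂ}
    (hy : ‖y‖ < K⁻¹) : Summable fun n : ℕ => ((n : ℂ) + 1) ^ k * c n * y ^ (n + 1) := by
  obtain ⟨r, hyr, u, hu, hbound⟩ := exists_summable_bound_momentSeries hc k hy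
  exact hu.of_norm_bounded fun n => hbound n y (mem_ball_zero_iff.2 hyr)

theorem differentiableOn_momentSeries (hc : ∀ n, ‖c n‖ ≤ K ^ (n + 1)) (k : ℕ) :
    DifferentiableOn ℂ (momentSeries c k) (ball 0 K⁻¹) := by
  intro y hy
  obtain ⟨r, hyr, u, hu, hbound⟩ :=
    exists_summable_bound_momentSeries hc k (mem_ball_zero_iff.1 hy)
  have hdiff : DifferentiableOn ℂ (momentSeries c k) (ball 0 r) :=
    differentiableOn_tsum_of_summable_norm hu (fun n => by fun_prop) isOpen_ball hbound
  exact (hdiff.differentiableAt (isOpen_ball.mem_nhds (mem_ball_zero_iff.2 hyr)))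
    |>.differentiableWithinAt

theorem theta_momentSeries (hc : ∀ n, ‖c n‖ ≤ K ^ (n + 1)) (k : ℕ) {y : ℂ} (hy : ‖y‖ < K⁻¹) :
    theta (momentSeries c k) y = momentSeries c (k + 1) y := by
  obtain ⟨r, hyr, u, hu, hbound⟩ := exists_summable_bound_momentSeries hc k hy
  have hsum : HasSum (fun n : ℕ => deriv (fun z => ((n : ℂ) + 1) ^ k * c n * z ^ (n + 1)) y)
      (deriv (momentSeries c k) y) :=
    hasSum_deriv_of_summable_norm hu (fun n => by fun_prop) isOpen_ball hbound
      (mem_ball_zero_iff.2 hyr)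
  rw [theta, momentSeries, ← (hsum.mul_left y).tsum_eq]
  congr 1
  funext n
  simp only [deriv_const_mul_field', deriv_pow_field, Nat.add_sub_cancel]
  push_cast
  ring

theorem hasThetaOn_momentSeries (hc : ∀ n, ‖c n‖ ≤ K ^ (n + 1)) (k : ℕ) :
    HasThetaOn (momentSeries c k) (momentSeries c (k + 1)) (ball 0 K⁻¹) :=
  ⟨differentiableOn_momentSeries hc k,
    fun _ hy => theta_momentSeries hc k (mem_ball_zero_iff.1 hy)⟩

theorem momentSeries_picardFuchs_eq (hc : ∀ n, ‖c n‖ ≤ K ^ (n + 1))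
    (hrec : ∀ n : ℕ, ((n : ℂ) + 2) ^ 3 * c (n + 1) =
      -(3 * ((n : ℂ) + 1) * (3 * n + 4) * (3 * n + 5)) * c n)
    {y : ℂ} (hy : ‖y‖ < K⁻¹) :
    momentSeries c 3 y + 3 * y * (9 * momentSeries c 3 y + 9 * momentSeries c 2 y +
      2 * momentSeries c 1 y) = c 0 * y := by
  have hs (k : ℕ) : HasSum (fun n : ℕ => ((n : ℂ) + 1) ^ k * c n * y ^ (n + 1))
      (momentSeries c k y) := (summable_momentSeries hc k hy).hasSum
  have hshift : HasSum (fun n : ℕ => ((n : ℂ) + 2) ^ 3 * c (n + 1) * y ^ (n + 2))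
      (momentSeries c 3 y - c 0 * y) := by
    convert! (hasSum_nat_add_iff' 1).2 (hs 3) using 1
    · funext n
      push_cast
      ring
    · simp
  have hrest : HasSum
      (fun n : ℕ => 3 * y * (9 * ((n : ℂ) + 1) ^ 3 + 9 * ((n : ℂ) + 1) ^ 2 + 2 * ((n : ℂ) + 1)) *
        c n * y ^ (n + 1))
      (3 * y * (9 * momentSeries c 3 y + 9 * momentSeries c 2 y + 2 * momentSeries c 1 y)) := by
    convert! (((hs 3).mul_left 9).add (((hs 2).mul_left 9).add ((hs 1).mul_left 2))).mul_left
      (3 * y) using 1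
    · funext n
      ring
    · ring
  have htermwise := hshift.add hrest
  have hzero : ∀ n : ℕ, ((n : ℂ) + 2) ^ 3 * c (n + 1) * y ^ (n + 2) +
      3 * y * (9 * ((n : ℂ) + 1) ^ 3 + 9 * ((n : ℂ) + 1) ^ 2 + 2 * ((n : ℂ) + 1)) *
        c n * y ^ (n + 1) = 0 := fun n => by
    linear_combination y ^ (n + 2) * hrec n
  rw [funext hzero] at htermwise
  linear_combination htermwise.unique hasSum_zero

end momentSeries

theorem Nat.factorial_three_mul_le (k : ℕ) : (3 * k)! ≤ 27 ^ k * k ! ^ 3 := by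
  induction k with
  | zero => simp
  | succ k ih =>
    have hfac : (3 * (k + 1))! = (3 * k + 3) * (3 * k + 2) * (3 * k + 1) * (3 * k)! := by
      rw [show 3 * (k + 1) = 3 * k + 2 + 1 by ring, Nat.factorial_succ, Nat.factorial_succ,
        Nat.factorial_succ]
      ring
    calc (3 * (k + 1))! ≤ 27 * (k + 1) ^ 3 * (27 ^ k * k ! ^ 3) := by
          rw [hfac]
          exact Nat.mul_le_mul (by nlinarith) ih
      _ = 27 ^ (k + 1) * (k + 1)! ^ 3 := by
          rw [Nat.factorial_succ]
          ring

noncomputable def w1Coeff (n : ℕ) : ℂ := (-1) ^ (n + 1) * ((3 * n + 2)! / ((n + 1)! : ℂ) ^ 3)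

theorem norm_w1Coeff_le (n : ℕ) : ‖w1Coeff n‖ ≤ 27 ^ (n + 1) := by
  have hfac : ((3 * n + 2)! : ℝ) ≤ 27 ^ (n + 1) * ((n + 1)! : ℝ) ^ 3 := by
    exact_mod_cast (Nat.factorial_le (by omega)).trans (Nat.factorial_three_mul_le (n + 1))
  rw [w1Coeff, norm_mul, norm_pow, norm_neg, norm_one, one_pow, one_mul, norm_div, norm_pow,
    Complex.norm_natCast, Complex.norm_natCast, div_le_iff₀ (by positivity)]
  exact hfac

theorem w1Coeff_zero : w1Coeff 0 = -2 := by
  norm_num [w1Coeff, Nat.factorial]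

theorem w1Coeff_succ (n : ℕ) : ((n : ℂ) + 2) ^ 3 * w1Coeff (n + 1) =
    -(3 * ((n : ℂ) + 1) * (3 * n + 4) * (3 * n + 5)) * w1Coeff n := by
  rw [w1Coeff, w1Coeff, show 3 * (n + 1) + 2 = 3 * n + 2 + 1 + 1 + 1 by ring, Nat.factorial_succ,
    Nat.factorial_succ, Nat.factorial_succ, Nat.factorial_succ (n + 1)]
  have hn : ((n : ℂ) + 1 + 1) ≠ 0 := by exact_mod_cast (n + 1).succ_ne_zero
  push_cast
  field_simp
  ring

theorem tsum_w1_eq_momentSeries (v : ℂ) :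
    ∑' m : ℕ, (((3 * (m + 1) - 1).factorial : ℂ) / ((m + 1).factorial : ℂ) ^ 3) * (-v) ^ (m + 1) =
      momentSeries w1Coeff 0 v := by
  refine tsum_congr fun m => ?_
  rw [w1Coeff, show 3 * (m + 1) - 1 = 3 * m + 2 by omega, neg_pow]
  ring

/-- The single-logarithm solution
`w₁(y) = (1/(2πi))·log y + (3/(2πi))·Σ_{m≥1} ((3m-1)!/(m!)³)(-y)^m`
satisfies `L w₁ = 0` for `0 < |y| < 1/27`; here `Lg` is any branch of the complex logarithm
(a holomorphic right inverse of `exp`) on an open domain `U` avoiding `0` and contained in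
the punctured disk of radius `1/27`. -/
theorem picardFuchs_w1 (U : Set ℂ) (hU : IsOpen U)
    (hU' : ∀ y ∈ U, 0 < ‖y‖ ∧ ‖y‖ < 1/27)
    (Lg : ℂ → ℂ) (hLg : DifferentiableOn ℂ Lg U) (hbranch : ∀ y ∈ U, Complex.exp (Lg y) = y) :
    ∀ y ∈ U,
      picardFuchs (fun v =>
        (1 / (2 * Real.pi * Complex.I)) * Lg v +
          (3 / (2 * Real.pi * Complex.I)) *
            ∑' m : ℕ, (((3*(m+1) - 1).factorial : ℂ) / ((m+1).factorial : ℂ)^3) * (-v)^(m+1)) y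
        = 0 := by
  intro y hy
  have hUball : U ⊆ ball 0 27⁻¹ := fun z hz => by simpa [one_div] using (hU' z hz).2
  have hG (k : ℕ) := (hasThetaOn_momentSeries (K := 27) norm_w1Coeff_le k).mono hUball
  simp only [tsum_w1_eq_momentSeries]
  rw [picardFuchs_const_mul_add_const_mul hU (hasThetaOn_of_exp_eq hU hLg hbranch) hG _ _ hy,
    momentSeries_picardFuchs_eq norm_w1Coeff_le w1Coeff_succ (mem_ball_zero_iff.1 (hUball hy)),
    w1Coeff_zero]
  ring
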